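/- arXiv:math/0501206 — 2 statements merged into one kernel-verified Lean document; each statement's English description precedes it below -/
import Mathlib

section
/- Let n be a positive integer. Define the binary operation A ∘ B = AB − BA + (tr B)·A − (tr A)·B on n×n complex matrices. For n×n complex matrices A, B, C, D, set S = (tr A)·(CB − BC) + (tr B)·(AC − CA) + (tr C)·(BA − AB). Then ((A∘B)∘C + (C∘A)∘B + (B∘C)∘A) ∘ D = SD − DS + (tr D)·S. -/
/-!
Every value of `∘` is traceless, so on `S := tr A·[C,B] + tr B·[A,C] + tr C·[B,A]` the operation
reduces to `S ∘ D = [S, D] + (tr D)·S`. It then suffices that the cyclic sum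
`(A∘B)∘C + (C∘A)∘B + (B∘C)∘A` equals `S`, which is a direct expansion using `tr (XY) = tr (YX)`.
-/

open Matrix

/-- The deformed commutator `A ∘ B = AB − BA + (tr B)·A − (tr A)·B`. -/
noncomputable def circ {n : ℕ} (A B : Matrix (Fin n) (Fin n) ℂ) : Matrix (Fin n) (Fin n) ℂ :=
  A * B - B * A + B.trace • A - A.trace • B

section Circ

variable {n : ℕ}

theorem trace_circ (A B : Matrix (Fin n) (Fin n) ℂ) : (circ A B).trace = 0 := by
  simp only [circ, trace_add, trace_sub, trace_smul, trace_mul_comm B A, smul_eq_mul]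
  ring

theorem circ_of_trace_eq_zero {A : Matrix (Fin n) (Fin n) ℂ} (hA : A.trace = 0)
    (B : Matrix (Fin n) (Fin n) ℂ) : circ A B = A * B - B * A + B.trace • A := by
  rw [circ, hA, zero_smul, sub_zero]

theorem circ_cyclic_sum (A B C : Matrix (Fin n) (Fin n) ℂ) :
    circ (circ A B) C + circ (circ C A) B + circ (circ B C) A =
      A.trace • (C * B - B * C) + B.trace • (A * C - C * A) + C.trace • (B * A - A * B) := by
  simp only [circ, trace_add, trace_sub, trace_smul, trace_mul_comm B A, trace_mul_comm C A,
    trace_mul_comm C B, smul_eq_mul, sub_mul, mul_sub, add_mul, mul_add, smul_mul_assoc,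
    mul_smul_comm, smul_sub, smul_add, smul_smul, mul_assoc]
  module

end Circ

theorem stmt_4_general (n : ℕ) (A B C D : Matrix (Fin n) (Fin n) ℂ)
    (S : Matrix (Fin n) (Fin n) ℂ)
    (hS : S = A.trace • (C * B - B * C) + B.trace • (A * C - C * A) +
      C.trace • (B * A - A * B)) :
    circ (circ (circ A B) C + circ (circ C A) B + circ (circ B C) A) D =
      S * D - D * S + D.trace • S := by
  rw [circ_cyclic_sum, ← hS]
  have hS_traceless : S.trace = 0 := by
    rw [hS, ← circ_cyclic_sum, trace_add, trace_add, trace_circ, trace_circ, trace_circ]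
    norm_num
  exact circ_of_trace_eq_zero hS_traceless D

theorem stmt_4 (n : ℕ) (hn : 0 < n) (A B C D : Matrix (Fin n) (Fin n) ℂ)
    (S : Matrix (Fin n) (Fin n) ℂ)
    (hS : S = A.trace • (C * B - B * C) + B.trace • (A * C - C * A) +
      C.trace • (B * A - A * B)) :
    circ (circ (circ A B) C + circ (circ C A) B + circ (circ B C) A) D =
      S * D - D * S + D.trace • S :=
  stmt_4_general n A B C D S hS
end

section
/- Let n be a positive integer. Define the binary operation A ∘ B = AB − BA + (tr B)·A − (tr A)·B on n×n complex matrices. Then for all n×n complex matrices A, B, C, D one has ((A∘B)∘C + (C∘A)∘B + (B∘C)∘A) ∘ D + ((C∘B)∘D + (D∘C)∘B + (B∘D)∘C) ∘ A + ((C∘D)∘A + (A∘C)∘D + (D∘A)∘C) ∘ B + ((B∘A)∘D + (D∘B)∘A + (A∘D)∘B) ∘ C = 0. -/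
/-!
With `⁅A, B⁆ = AB − BA` and the character `χ = tr` of the matrix Lie algebra,
`A ∘ B = ⁅A, B⁆ + χ B • A − χ A • B`, and `χ (A ∘ B) = 0`. Hence the Jacobi identity for `∘` fails
only by the alternating expression `J x y z = -(χ x • ⁅y, z⁆ + χ y • ⁅z, x⁆ + χ z • ⁅x, y⁆)`, which
again satisfies `χ J = 0`, and the four terms of the identity are `±J ∘ w` over the alternating
arrangements of `x, y, z, w`.
-/

open Matrix

namespace LieAlgebra

variable {R L : Type*} [CommRing R] [LieRing L] [LieAlgebra R L]

lemma lie_lie_add_lie_lie_add_lie_lie (x y z : L) :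
    ⁅⁅x, y⁆, z⁆ + ⁅⁅y, z⁆, x⁆ + ⁅⁅z, x⁆, y⁆ = 0 := by
  rw [← lie_skew ⁅x, y⁆ z, ← lie_skew ⁅y, z⁆ x, ← lie_skew ⁅z, x⁆ y]
  linear_combination (norm := module) -lie_jacobi z x y

def deformedBracket (χ : LieCharacter R L) (x y : L) : L :=
  ⁅x, y⁆ + χ y • x - χ x • y

variable {χ : LieCharacter R L}

@[simp]
lemma lieCharacter_deformedBracket (x y : L) : χ (deformedBracket χ x y) = 0 := by
  simp [deformedBracket, mul_comm]

lemma deformedBracket_of_apply_eq_zero {x : L} (hx : χ x = 0) (y : L) :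
    deformedBracket χ x y = ⁅x, y⁆ + χ y • x := by
  simp [deformedBracket, hx]

lemma deformedBracket_jacobiator (x y z : L) :
    deformedBracket χ (deformedBracket χ x y) z + deformedBracket χ (deformedBracket χ z x) y +
      deformedBracket χ (deformedBracket χ y z) x =
      -(χ x • ⁅y, z⁆ + χ y • ⁅z, x⁆ + χ z • ⁅x, y⁆) := by
  simp only [deformedBracket_of_apply_eq_zero (lieCharacter_deformedBracket _ _)]
  simp only [deformedBracket, add_lie, sub_lie, smul_lie]
  linear_combination (norm := module) lie_lie_add_lie_lie_add_lie_lie x y z -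
    χ y • lie_skew x z - χ x • lie_skew z y - χ z • lie_skew y x

lemma deformedBracket_jacobiator_alternating_sum (x y z w : L) :
    deformedBracket χ (deformedBracket χ (deformedBracket χ x y) z +
        deformedBracket χ (deformedBracket χ z x) y + deformedBracket χ (deformedBracket χ y z) x) w +
      deformedBracket χ (deformedBracket χ (deformedBracket χ z y) w +
        deformedBracket χ (deformedBracket χ w z) y + deformedBracket χ (deformedBracket χ y w) z) x +
      deformedBracket χ (deformedBracket χ (deformedBracket χ z w) x +
        deformedBracket χ (deformedBracket χ x z) w + deformedBracket χ (deformedBracket χ w x) z) y +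
      deformedBracket χ (deformedBracket χ (deformedBracket χ y x) w +
        deformedBracket χ (deformedBracket χ w y) x + deformedBracket χ (deformedBracket χ x w) y) z =
      0 := by
  simp only [deformedBracket_jacobiator]
  simp (disch := simp [lieCharacter_apply_lie]) only [deformedBracket_of_apply_eq_zero]
  simp only [neg_lie, add_lie, smul_lie]
  -- the terms linear in `χ` cancel by the Jacobi identity, the quadratic ones by antisymmetry
  linear_combination (norm := module)
    -(χ x • lie_lie_add_lie_lie_add_lie_lie y z w) - χ y • lie_lie_add_lie_lie_add_lie_lie z x w -
      χ z • lie_lie_add_lie_lie_add_lie_lie x y w - χ w • lie_lie_add_lie_lie_add_lie_lie z y x +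
      (χ w * χ x) • lie_skew y z + (χ w * χ y) • lie_skew z x + (χ w * χ z) • lie_skew x y +
      (χ x * χ z) • lie_skew y w + (χ x * χ y) • lie_skew w z + (χ y * χ z) • lie_skew w x

end LieAlgebra

attribute [local instance] LieRing.ofAssociativeRing

namespace Matrix

variable (n R : Type*) [Fintype n] [DecidableEq n] [CommRing R]

def traceLieCharacter : LieAlgebra.LieCharacter R (Matrix n n R) where
  __ := traceLinearMap n R R
  map_lie' {A B} := by
    rw [LinearMap.toFun_eq_coe, traceLinearMap_apply, LieAlgebra.matrix_trace_commutator_zero,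
      Ring.lie_def, mul_comm, sub_self]

end Matrix

lemma circ_eq_deformedBracket {n : ℕ} (A B : Matrix (Fin n) (Fin n) ℂ) :
    circ A B = LieAlgebra.deformedBracket (traceLieCharacter (Fin n) ℂ) A B :=
  rfl

theorem stmt_5_general (n : ℕ) (A B C D : Matrix (Fin n) (Fin n) ℂ) :
    circ (circ (circ A B) C + circ (circ C A) B + circ (circ B C) A) D +
    circ (circ (circ C B) D + circ (circ D C) B + circ (circ B D) C) A +
    circ (circ (circ C D) A + circ (circ A C) D + circ (circ D A) C) B +
    circ (circ (circ B A) D + circ (circ D B) A + circ (circ A D) B) C = 0 := by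
  simp only [circ_eq_deformedBracket]
  exact LieAlgebra.deformedBracket_jacobiator_alternating_sum A B C D

theorem stmt_5 (n : ℕ) (hn : 0 < n) (A B C D : Matrix (Fin n) (Fin n) ℂ) :
    circ (circ (circ A B) C + circ (circ C A) B + circ (circ B C) A) D +
    circ (circ (circ C B) D + circ (circ D C) B + circ (circ B D) C) A +
    circ (circ (circ C D) A + circ (circ A C) D + circ (circ D A) C) B +
    circ (circ (circ B A) D + circ (circ D B) A + circ (circ A D) B) C = 0 :=
  stmt_5_general n A B C D
end
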